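/- arXiv:2101.02517 — 3 statements merged into one kernel-verified Lean document; each statement's English description precedes it below -/
import Mathlib

section
/- Let μ, ν be finite positive measures on ℝ^d with finite first moments and μ ≤_c ν in the convex order. Then for every ε > 0, I^1_ε(μ) ≤ I^1_ε(ν), where I^1_ε(η) = sup{ ∫ |x - x₀| dτ(x) : τ ≤ η, τ(ℝ^d) ≤ ε }. -/
/-!
For `t ≥ 0` the function `x ↦ (‖x - x₀‖ - t)⁺` is convex, and every `τ ≤ μ` of mass at most `ε`
satisfies `∫ ‖x - x₀‖ dτ ≤ t ε + ∫ (‖x - x₀‖ - t)⁺ dμ ≤ t ε + ∫ (‖x - x₀‖ - t)⁺ dν`.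
For `t` an upper `ε`-quantile of `‖x - x₀‖` under `ν`, the measure `σ` equal to `ν` on
`{‖x - x₀‖ > t}` plus a fraction of `ν` on `{‖x - x₀‖ = t}` has mass `ε` and
`∫ ‖x - x₀‖ dσ = t ε + ∫ (‖x - x₀‖ - t)⁺ dν`, so this bound is at most `I^1_ε(ν)`.
-/

open MeasureTheory

/-- `I^1_ε(η) = sup { ∫ |x - x₀| dτ : τ ≤ η, τ(ℝ^d) ≤ ε }`. -/
noncomputable def I1eps {d : ℕ} (x₀ : EuclideanSpace ℝ (Fin d))
    (η : Measure (EuclideanSpace ℝ (Fin d))) (ε : ℝ) : ℝ :=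
  sSup {c : ℝ | ∃ τ : Measure (EuclideanSpace ℝ (Fin d)), τ ≤ η ∧
    τ Set.univ ≤ ENNReal.ofReal ε ∧ c = ∫ x, ‖x - x₀‖ ∂τ}

open Set
open scoped ENNReal

theorem ENNReal.exists_le_one_add_mul_eq {a b c : ℝ≥0∞} (hac : a ≤ c) (hc : c ≤ a + b)
    (hb : b ≠ ∞) : ∃ θ ≤ 1, a + θ * b = c := by
  rcases eq_or_ne b 0 with rfl | hb0
  · exact ⟨0, zero_le_one, by simpa using le_antisymm hac (by simpa using hc)⟩
  refine ⟨(c - a) / b, ENNReal.div_le_of_le_mul ?_, ?_⟩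
  · rw [one_mul, tsub_le_iff_left]
    exact hc
  · rw [ENNReal.div_mul_cancel hb0 hb, add_tsub_cancel_of_le hac]

section Threshold

variable {α : Type*} [MeasurableSpace α] {ν : Measure α} {g : α → ℝ}

theorem measure_lt_le_of_forall_gt {t : ℝ} {c : ℝ≥0∞}
    (h : ∀ s, t < s → ν {x | s < g x} ≤ c) : ν {x | t < g x} ≤ c := by
  have hmono : Monotone fun n : ℕ => {x | t + 1 / (n + 1) < g x} := fun m n hmn x hx =>
    lt_of_le_of_lt (show t + 1 / ((n : ℝ) + 1) ≤ t + 1 / ((m : ℝ) + 1) by gcongr) hx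
  have hU : ⋃ n : ℕ, {x | t + 1 / (n + 1) < g x} = {x | t < g x} := by
    ext x
    simp only [mem_iUnion, mem_ofPred_eq]
    constructor
    · rintro ⟨n, hn⟩
      linarith [Nat.one_div_pos_of_nat (α := ℝ) (n := n)]
    · intro hx
      obtain ⟨n, hn⟩ := exists_nat_one_div_lt (sub_pos.2 hx)
      exact ⟨n, by linarith⟩
  rw [← hU]
  exact le_of_tendsto' (tendsto_measure_iUnion_atTop hmono) fun n =>
    h _ (lt_add_of_pos_right t Nat.one_div_pos_of_nat)

theorem le_measure_le_of_forall_lt [IsFiniteMeasure ν] (hg : Measurable g) {t : ℝ}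
    {c : ℝ≥0∞} (h : ∀ s < t, c ≤ ν {x | s < g x}) : c ≤ ν {x | t ≤ g x} := by
  have hanti : Antitone fun n : ℕ => {x | t - 1 / (n + 1) < g x} := fun m n hmn x hx =>
    lt_of_le_of_lt (show t - 1 / ((m : ℝ) + 1) ≤ t - 1 / ((n : ℝ) + 1) by gcongr) hx
  have hI : ⋂ n : ℕ, {x | t - 1 / (n + 1) < g x} = {x | t ≤ g x} := by
    ext x
    simp only [mem_iInter, mem_ofPred_eq]
    constructor
    · intro hx
      by_contra! hlt
      obtain ⟨n, hn⟩ := exists_nat_one_div_lt (sub_pos.2 hlt)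
      linarith [hx n]
    · intro hx n
      linarith [Nat.one_div_pos_of_nat (α := ℝ) (n := n)]
  rw [← hI]
  refine ge_of_tendsto' (tendsto_measure_iInter_atTop
    (fun n => (measurableSet_lt measurable_const hg).nullMeasurableSet) hanti
    ⟨0, measure_ne_top ν _⟩) fun n => h _ (sub_lt_self t Nat.one_div_pos_of_nat)

/-- An upper `ε`-quantile of `g` under `ν`. -/
theorem exists_measure_lt_le_le_measure_le [IsFiniteMeasure ν] (hg : Measurable g)
    {ε : ℝ≥0∞} (hε : 0 < ε) (hεν : ε < ν univ) :
    ∃ t, ν {x | t < g x} ≤ ε ∧ ε ≤ ν {x | t ≤ g x} := by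
  have hanti : Antitone fun s : ℝ => {x | s < g x} := fun s s' hss' x hx => hss'.trans_lt hx
  set S := {s : ℝ | ν {x | s < g x} ≤ ε}
  have hS : S.Nonempty := by
    have hI : ⋂ s : ℝ, {x | s < g x} = ∅ :=
      iInter_eq_empty_iff.2 fun x => ⟨g x, (lt_irrefl (g x)).elim⟩
    have := tendsto_measure_iInter_atTop (μ := ν)
      (fun s => (measurableSet_lt measurable_const hg).nullMeasurableSet) hanti
      ⟨0, measure_ne_top ν _⟩
    rw [hI, measure_empty] at this
    obtain ⟨s, hs⟩ := (this.eventually (gt_mem_nhds hε)).exists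
    exact ⟨s, hs.le⟩
  have hS_bdd : BddBelow S := by
    have hU : ⋃ s : ℝ, {x | s < g x} = univ :=
      iUnion_eq_univ_iff.2 fun x => ⟨g x - 1, sub_one_lt (g x)⟩
    have := tendsto_measure_iUnion_atBot (μ := ν) hanti
    rw [hU] at this
    obtain ⟨s₀, hs₀⟩ := (this.eventually (lt_mem_nhds hεν)).exists
    exact ⟨s₀, fun s hs => le_of_not_gt fun hss₀ => (hs₀.trans_le
      (measure_mono (hanti hss₀.le))).not_ge hs⟩
  refine ⟨sInf S, measure_lt_le_of_forall_gt fun s hs => ?_,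
    le_measure_le_of_forall_lt hg fun s hs => ?_⟩
  · obtain ⟨s', hs'S, hs's⟩ := exists_lt_of_csInf_lt hS hs
    exact (measure_mono (hanti hs's.le)).trans hs'S
  · exact le_of_not_gt fun hsS => (csInf_le hS_bdd hsS.le).not_gt hs


theorem exists_le_measure_univ_eq_integral_eq [IsFiniteMeasure ν] (hg : Measurable g)
    (hgi : Integrable g ν) {t ε : ℝ} (hε : 0 ≤ ε) (hlt : ν {x | t < g x} ≤ ENNReal.ofReal ε)
    (hle : ENNReal.ofReal ε ≤ ν {x | t ≤ g x}) :
    ∃ σ ≤ ν, σ univ = ENNReal.ofReal ε ∧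
      ∫ x, g x ∂σ = t * ε + ∫ x, max (g x - t) 0 ∂ν := by
  set A := {x | t < g x}
  set B := g ⁻¹' {t}
  have hA : MeasurableSet A := measurableSet_lt measurable_const hg
  have hB : MeasurableSet B := hg (measurableSet_singleton t)
  have hAB : Disjoint A B := disjoint_left.2 fun x hxA hxB => hxA.ne' hxB
  have hAB_le : ENNReal.ofReal ε ≤ ν A + ν B := by
    refine hle.trans ((measure_mono fun x hx => ?_).trans (measure_union_le A B))
    exact (eq_or_lt_of_le hx).elim (fun h => Or.inr h.symm) Or.inl
  obtain ⟨θ, hθ1, hθ⟩ := ENNReal.exists_le_one_add_mul_eq hlt hAB_le (measure_ne_top ν B)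
  have hθ_top : θ ≠ ∞ := ne_top_of_le_ne_top ENNReal.one_ne_top hθ1
  refine ⟨ν.restrict A + θ • ν.restrict B, ?_, ?_, ?_⟩
  · calc ν.restrict A + θ • ν.restrict B ≤ ν.restrict A + ν.restrict B := by
          gcongr
          exact Measure.le_iff'.2 fun _ => mul_le_of_le_one_left zero_le hθ1
      _ = ν.restrict (A ∪ B) := (Measure.restrict_union hAB hB).symm
      _ ≤ ν := Measure.restrict_le_self
  · simpa using hθ
  · have hθ_real : ν.real A + θ.toReal * ν.real B = ε := by
      rw [← ENNReal.toReal_ofReal hε, ← hθ, ENNReal.toReal_add (measure_ne_top ν A)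
        (ENNReal.mul_ne_top hθ_top (measure_ne_top ν B)), ENNReal.toReal_mul]
      rfl
    have hB_int : ∫ x in B, g x ∂ν = ν.real B * t := by
      rw [setIntegral_congr_fun hB (g := fun _ => t) fun x hx => hx, setIntegral_const,
        smul_eq_mul]
    have hpos_int : ∫ x, max (g x - t) 0 ∂ν = ∫ x in A, g x ∂ν - ν.real A * t := by
      rw [← setIntegral_eq_integral_of_forall_compl_eq_zero (s := A) fun x hx =>
          max_eq_right (sub_nonpos.2 (not_lt.1 hx)),
        setIntegral_congr_fun hA (g := fun x => g x - t) fun x hx =>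
          max_eq_left (sub_pos.2 hx).le,
        integral_sub hgi.integrableOn (integrable_const t), setIntegral_const, smul_eq_mul]
    rw [integral_add_measure hgi.restrict (hgi.restrict.smul_measure hθ_top),
      integral_smul_measure, hB_int, hpos_int, smul_eq_mul]
    linear_combination t * hθ_real

theorem exists_mul_add_integral_max_sub_le_integral [IsFiniteMeasure ν] (hg : Measurable g)
    (hgi : Integrable g ν) (hg0 : 0 ≤ g) {ε : ℝ} (hε : 0 < ε) :
    ∃ t, 0 ≤ t ∧ ∃ σ ≤ ν, σ univ ≤ ENNReal.ofReal ε ∧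
      t * ε + ∫ x, max (g x - t) 0 ∂ν ≤ ∫ x, g x ∂σ := by
  by_cases hν : ν univ ≤ ENNReal.ofReal ε
  · refine ⟨0, le_rfl, ν, le_rfl, hν, le_of_eq ?_⟩
    simp only [zero_mul, zero_add, sub_zero]
    exact integral_congr_ae (ae_of_all _ fun x => max_eq_left (hg0 x))
  obtain ⟨t, hlt, hle⟩ := exists_measure_lt_le_le_measure_le hg (ENNReal.ofReal_pos.2 hε)
    (not_le.1 hν)
  have ht : 0 ≤ t := by
    by_contra! ht
    have hlt_g : ∀ x, t < g x := fun x => ht.trans_le (hg0 x)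
    exact hν (by simpa [hlt_g] using hlt)
  obtain ⟨σ, hσν, hσ, hσ_int⟩ := exists_le_measure_univ_eq_integral_eq hg hgi hε.le hlt hle
  exact ⟨t, ht, σ, hσν, hσ.le, hσ_int.ge⟩

end Threshold

theorem integral_le_mul_add_integral_max_sub {α : Type*} [MeasurableSpace α]
    {τ μ : Measure α} [IsFiniteMeasure μ] (hτμ : τ ≤ μ) {g : α → ℝ} (hg : Integrable g μ)
    {t ε : ℝ} (ht : 0 ≤ t) (hε : 0 ≤ ε) (hτ : τ univ ≤ ENNReal.ofReal ε) :
    ∫ x, g x ∂τ ≤ t * ε + ∫ x, max (g x - t) 0 ∂μ := by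
  have : IsFiniteMeasure τ := isFiniteMeasure_of_le μ hτμ
  have hgτ := hg.mono_measure hτμ
  have hpos : Integrable (fun x => max (g x - t) 0) μ := (hg.sub (integrable_const t)).pos_part
  calc ∫ x, g x ∂τ ≤ ∫ x, (t + max (g x - t) 0) ∂τ :=
        integral_mono hgτ ((integrable_const t).add (hpos.mono_measure hτμ)) fun x => by
          linarith [le_max_left (g x - t) 0]
    _ = τ.real univ * t + ∫ x, max (g x - t) 0 ∂τ := by
        rw [integral_add (integrable_const t) (hpos.mono_measure hτμ), integral_const,
          smul_eq_mul]
    _ ≤ t * ε + ∫ x, max (g x - t) 0 ∂μ := by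
        rw [mul_comm]
        exact add_le_add (mul_le_mul_of_nonneg_left (ENNReal.toReal_le_of_le_ofReal hε hτ) ht)
          (integral_mono_measure hτμ (ae_of_all _ fun x => le_max_right _ _) hpos)

theorem convexOn_max_norm_sub_sub_zero {E : Type*} [NormedAddCommGroup E] [NormedSpace ℝ E]
    (x₀ : E) (t : ℝ) : ConvexOn ℝ univ fun x => max (‖x - x₀‖ - t) 0 := by
  simp_rw [← dist_eq_norm]
  exact ((convexOn_dist x₀ convex_univ).sub (concaveOn_const t convex_univ)).sup
    (convexOn_const 0 convex_univ)

theorem MeasureTheory.Integrable.norm_sub_const {E : Type*} [NormedAddCommGroup E]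
    [MeasurableSpace E] [OpensMeasurableSpace E] {μ : Measure E} [IsFiniteMeasure μ]
    (h : Integrable (fun x => ‖x‖) μ) (x₀ : E) : Integrable (fun x => ‖x - x₀‖) μ :=
  (h.add (integrable_const ‖x₀‖)).mono'
    (continuous_id.sub continuous_const).norm.aestronglyMeasurable
    (ae_of_all _ fun x => (norm_norm (x - x₀)).trans_le (norm_sub_le x x₀))

theorem integral_norm_sub_le_I1eps {d : ℕ} {x₀ : EuclideanSpace ℝ (Fin d)}
    {σ ν : Measure (EuclideanSpace ℝ (Fin d))} {ε : ℝ}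
    (hν : Integrable (fun x => ‖x - x₀‖) ν) (hσν : σ ≤ ν) (hσ : σ univ ≤ ENNReal.ofReal ε) :
    ∫ x, ‖x - x₀‖ ∂σ ≤ I1eps x₀ ν ε := by
  refine le_csSup ⟨∫ x, ‖x - x₀‖ ∂ν, ?_⟩ ⟨σ, hσν, hσ, rfl⟩
  rintro _ ⟨τ, hτν, -, rfl⟩
  exact integral_mono_measure hτν (ae_of_all _ fun _ => norm_nonneg _) hν

/-- If `μ ≤_c ν` in convex order, then `I^1_ε(μ) ≤ I^1_ε(ν)` for every `ε > 0`. -/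
theorem stmt7 {d : ℕ} (x₀ : EuclideanSpace ℝ (Fin d))
    (μ ν : Measure (EuclideanSpace ℝ (Fin d)))
    [IsFiniteMeasure μ] [IsFiniteMeasure ν]
    (hμ : Integrable (fun x => ‖x‖) μ) (hν : Integrable (fun x => ‖x‖) ν)
    (hc : ∀ f : EuclideanSpace ℝ (Fin d) → ℝ, ConvexOn ℝ Set.univ f →
      Integrable f μ → Integrable f ν → ∫ x, f x ∂μ ≤ ∫ x, f x ∂ν) :
    ∀ ε : ℝ, 0 < ε → I1eps x₀ μ ε ≤ I1eps x₀ ν ε := by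
  intro ε hε
  have hgμ := hμ.norm_sub_const x₀
  have hgν := hν.norm_sub_const x₀
  obtain ⟨t, ht, σ, hσν, hσ, hσ_int⟩ := exists_mul_add_integral_max_sub_le_integral
    (continuous_id.sub continuous_const).norm.measurable hgν (fun x => norm_nonneg (x - x₀)) hε
  have hσ_le := integral_norm_sub_le_I1eps hgν hσν hσ
  refine Real.sSup_le ?_ ((integral_nonneg fun x => norm_nonneg _).trans hσ_le)
  rintro _ ⟨τ, hτμ, hτ, rfl⟩
  calc ∫ x, ‖x - x₀‖ ∂τ ≤ t * ε + ∫ x, max (‖x - x₀‖ - t) 0 ∂μ :=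
        integral_le_mul_add_integral_max_sub hτμ hgμ ht hε.le hτ
    _ ≤ t * ε + ∫ x, max (‖x - x₀‖ - t) 0 ∂ν :=
        add_le_add_right (hc _ (convexOn_max_norm_sub_sub_zero x₀ t)
          (hgμ.sub (integrable_const t)).pos_part (hgν.sub (integrable_const t)).pos_part) _
    _ ≤ I1eps x₀ ν ε := hσ_int.trans hσ_le
end

section
/- Let μ^k, ν^k, μ, ν be probability measures on ℝ with finite first moments such that W_1(μ^k, μ) → 0 and W_1(ν^k, ν) → 0, all with common barycentre m₁. Then the convex-order supremum μ^k ∨_c ν^k converges to μ ∨_c ν in W_1, and the convex-order infimum μ^k ∧_c ν^k converges to μ ∧_c ν in W_1. -/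
open MeasureTheory

/-- The potential function `u_η(y) = ∫ |y - x| dη(x)`. -/
noncomputable def pot (η : Measure ℝ) (y : ℝ) : ℝ := ∫ x, |y - x| ∂η

/-- The convex hull (convex envelope) of a function. -/
noncomputable def coFun (f : ℝ → ℝ) (y : ℝ) : ℝ :=
  sSup {c : ℝ | ∃ g : ℝ → ℝ, ConvexOn ℝ Set.univ g ∧ (∀ z, g z ≤ f z) ∧ c = g y}

/-- The Wasserstein-1 distance. -/
noncomputable def W1R (μ ν : Measure ℝ) : ℝ :=
  sInf {c : ℝ | ∃ π : Measure (ℝ × ℝ), π.map Prod.fst = μ ∧ π.map Prod.snd = ν ∧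
    c = ∫ p, |p.1 - p.2| ∂π}

open ProbabilityTheory Filter Set Topology

/-!
Testing a coupling against `x ↦ |y - x|` gives `|u_μ - u_ν| ≤ W₁(μ, ν)`, so `W₁`-convergence makes
the potentials converge uniformly; `max`, `min` and the convex envelope are `1`-Lipschitz for the
sup norm, so the potentials of `μᵏ ∨_c νᵏ` and `μᵏ ∧_c νᵏ` converge too. Conversely, pointwise
convergence of potentials forces `W₁`-convergence: the difference quotients of `u_μ` bracket
`2 F_μ - 1`, so distribution functions converge at continuity points, quantile functions converge
a.e. on `(0, 1)`, and their `L¹` norms `u_μ(0)` converge; by Scheffé's lemma the cost of the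
quantile coupling tends to `0`. The common barycentre makes `|y - m₁|` a convex minorant of all the
potentials, so that every measure in sight has a finite first moment.
-/

theorem tendsto_integral_norm_sub_of_tendsto_integral_norm {ι α E : Type*} [MeasurableSpace α]
    [NormedAddCommGroup E] {m : Measure α} {l : Filter ι} [l.IsCountablyGenerated]
    {f : ι → α → E} {g : α → E} (hf : ∀ i, Integrable (f i) m) (hg : Integrable g m)
    (hae : ∀ᵐ x ∂m, Tendsto (fun i => f i x) l (𝓝 (g x)))
    (hnorm : Tendsto (fun i => ∫ x, ‖f i x‖ ∂m) l (𝓝 (∫ x, ‖g x‖ ∂m))) :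
    Tendsto (fun i => ∫ x, ‖f i x - g x‖ ∂m) l (𝓝 0) := by
  -- `‖f i‖ + ‖g‖ - ‖f i - g‖` lies in `[0, 2‖g‖]` and tends to `2‖g‖` a.e.
  have hsum (i : ι) : Integrable (fun x => ‖f i x‖ + ‖g x‖) m := (hf i).norm.add hg.norm
  have hdiff (i : ι) : Integrable (fun x => ‖f i x - g x‖) m := ((hf i).sub hg).norm
  have hdom : Tendsto (fun i => ∫ x, (‖f i x‖ + ‖g x‖ - ‖f i x - g x‖) ∂m) l
      (𝓝 (∫ x, 2 * ‖g x‖ ∂m)) := by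
    refine tendsto_integral_filter_of_dominated_convergence _
      (.of_forall fun i => ((hsum i).sub (hdiff i)).aestronglyMeasurable)
      (.of_forall fun i => .of_forall fun x => ?_) (hg.norm.const_mul 2) ?_
    · rw [Real.norm_eq_abs, abs_le]
      constructor <;> linarith [norm_sub_le (f i x) (g x), norm_le_norm_sub_add (f i x) (g x)]
    · filter_upwards [hae] with x hx
      have := (hx.norm.add_const ‖g x‖).sub (tendsto_iff_norm_sub_tendsto_zero.1 hx)
      simpa [two_mul] using this
  have heq (i : ι) : ∫ x, ‖f i x - g x‖ ∂m
      = ∫ x, ‖f i x‖ ∂m + ∫ x, ‖g x‖ ∂m - ∫ x, (‖f i x‖ + ‖g x‖ - ‖f i x - g x‖) ∂m := by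
    rw [integral_sub (hsum i) (hdiff i), integral_add (hf i).norm hg.norm]
    ring
  simp_rw [heq]
  convert (hnorm.add_const _).sub hdom using 2
  rw [integral_const_mul]
  ring

-- Only the values on `(0, 1)` are meaningful.
noncomputable def quantile (μ : Measure ℝ) (t : ℝ) : ℝ := sInf {x | t ≤ cdf μ x}

section Quantile

variable (μ : Measure ℝ)

lemma bddBelow_setOf_le_cdf {t : ℝ} (ht : 0 < t) : BddBelow {x | t ≤ cdf μ x} := by
  obtain ⟨x₀, hx₀⟩ := ((tendsto_cdf_atBot μ).eventually_lt_const ht).exists_forall_of_atBot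
  refine ⟨x₀, fun x hx => ?_⟩
  by_contra! hlt
  exact (hx₀ x hlt.le).not_ge hx

lemma nonempty_setOf_le_cdf {t : ℝ} (ht : t < 1) : {x | t ≤ cdf μ x}.Nonempty :=
  ((tendsto_cdf_atTop μ).eventually_const_le ht).exists

lemma quantile_le_iff {t : ℝ} (ht : t ∈ Ioo 0 1) {x : ℝ} : quantile μ t ≤ x ↔ t ≤ cdf μ x := by
  refine ⟨fun h => ?_, fun h => csInf_le (bddBelow_setOf_le_cdf μ ht.1) h⟩
  have hright : ∀ z, x < z → t ≤ cdf μ z := fun z hz => by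
    obtain ⟨w, hw, hwz⟩ := exists_lt_of_csInf_lt (nonempty_setOf_le_cdf μ ht.2) (h.trans_lt hz)
    exact hw.trans (monotone_cdf μ hwz.le)
  exact ge_of_tendsto
    ((cdf μ).right_continuous x |>.mono_left (nhdsWithin_mono _ Ioi_subset_Ici_self))
    (eventually_nhdsWithin_of_forall hright)

lemma monotoneOn_quantile : MonotoneOn (quantile μ) (Ioo 0 1) :=
  fun _ h₁ _ h₂ h12 => csInf_le_csInf (bddBelow_setOf_le_cdf μ h₁.1)
    (nonempty_setOf_le_cdf μ h₂.2) fun _ hx => h12.trans hx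

lemma aemeasurable_quantile : AEMeasurable (quantile μ) (volume.restrict (Ioo 0 1)) :=
  aemeasurable_restrict_of_monotoneOn measurableSet_Ioo (monotoneOn_quantile μ)

lemma map_quantile [IsProbabilityMeasure μ] :
    (volume.restrict (Ioo 0 1)).map (quantile μ) = μ := by
  have : IsProbabilityMeasure (volume.restrict (Ioo (0 : ℝ) 1)) := ⟨by simp⟩
  have := Measure.isProbabilityMeasure_map (aemeasurable_quantile μ)
  refine Measure.ext_of_Iic _ _ fun x => ?_
  have hpre : quantile μ ⁻¹' Iic x ∩ Ioo 0 1 = Iic (cdf μ x) ∩ Ioo 0 1 := by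
    ext t
    simp only [mem_inter_iff, mem_preimage, mem_Iic]
    exact and_congr_left fun ht => quantile_le_iff μ ht
  have hIoc : Iic (cdf μ x) ∩ Ioc 0 1 = Ioc 0 (cdf μ x) := by
    ext t
    simp only [mem_inter_iff, mem_Iic, mem_Ioc]
    constructor
    · rintro ⟨h, h0, -⟩; exact ⟨h0, h⟩
    · rintro ⟨h0, h⟩; exact ⟨h, h0, h.trans (cdf_le_one μ x)⟩
  rw [Measure.map_apply_of_aemeasurable (aemeasurable_quantile μ) measurableSet_Iic,
    Measure.restrict_apply' measurableSet_Ioo, hpre,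
    measure_congr ((ae_eq_refl _).inter Ioo_ae_eq_Ioc), hIoc, Real.volume_Ioc, sub_zero,
    ofReal_cdf]

variable {μ} [IsProbabilityMeasure μ]

lemma integrable_quantile (hμ : Integrable (fun x => |x|) μ) :
    Integrable (quantile μ) (volume.restrict (Ioo 0 1)) := by
  have hid : Integrable id μ := (integrable_norm_iff aestronglyMeasurable_id).1 hμ
  rw [← map_quantile μ] at hid
  exact (integrable_map_measure aestronglyMeasurable_id (aemeasurable_quantile μ)).1 hid

lemma integral_norm_quantile : ∫ t in Ioo 0 1, ‖quantile μ t‖ = ∫ x, |x| ∂μ := by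
  conv_rhs => rw [← map_quantile μ]
  exact (integral_map (aemeasurable_quantile μ) (by fun_prop)).symm

end Quantile

lemma exists_continuousAt_cdf_mem_Ioo (μ : Measure ℝ) {a b : ℝ} (hab : a < b) :
    ∃ x ∈ Ioo a b, ContinuousAt (cdf μ) x := by
  obtain ⟨x, hx, hax, hxb⟩ :=
    ((monotone_cdf μ).countable_not_continuousAt.dense_compl ℝ).exists_between hab
  exact ⟨x, ⟨hax, hxb⟩, not_not.mp hx⟩

lemma tendsto_quantile_of_tendsto_cdf {ι : Type*} {l : Filter ι} {μs : ι → Measure ℝ}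
    {μ : Measure ℝ} (hcdf : ∀ x, ContinuousAt (cdf μ) x →
      Tendsto (fun i => cdf (μs i) x) l (𝓝 (cdf μ x)))
    {t : ℝ} (ht : t ∈ Ioo 0 1)
    (hright : ∀ z, quantile μ t < z → ∃ t' ∈ Ioo 0 1, t < t' ∧ quantile μ t' < z) :
    Tendsto (fun i => quantile (μs i) t) l (𝓝 (quantile μ t)) := by
  refine tendsto_order.2 ⟨fun a ha => ?_, fun b hb => ?_⟩
  · obtain ⟨x, ⟨hax, hxt⟩, hx⟩ := exists_continuousAt_cdf_mem_Ioo μ ha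
    have hcdfx : cdf μ x < t := lt_of_not_ge fun h => hxt.not_ge ((quantile_le_iff μ ht).2 h)
    filter_upwards [(hcdf x hx).eventually_lt_const hcdfx] with i hi
    exact hax.trans (lt_of_not_ge fun h => hi.not_ge ((quantile_le_iff (μs i) ht).1 h))
  · obtain ⟨t', ht', htt', hlt⟩ := hright b hb
    obtain ⟨x, ⟨hx', hxb⟩, hx⟩ := exists_continuousAt_cdf_mem_Ioo μ hlt
    have hcdfx : t < cdf μ x := htt'.trans_le ((quantile_le_iff μ ht').1 hx'.le)
    filter_upwards [(hcdf x hx).eventually_const_lt hcdfx] with i hi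
    exact ((quantile_le_iff (μs i) ht).2 hi.le).trans_lt hxb

lemma ae_tendsto_quantile_of_tendsto_cdf {ι : Type*} {l : Filter ι} {μs : ι → Measure ℝ}
    {μ : Measure ℝ} (hcdf : ∀ x, ContinuousAt (cdf μ) x →
      Tendsto (fun i => cdf (μs i) x) l (𝓝 (cdf μ x))) :
    ∀ᵐ t ∂(volume.restrict (Ioo 0 1)),
      Tendsto (fun i => quantile (μs i) t) l (𝓝 (quantile μ t)) := by
  -- The quantile function jumps to the right of only countably many points.
  have hjumps := countable_image_lt_image_Ioi_within (Ioo (0 : ℝ) 1) (quantile μ)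
  filter_upwards [ae_restrict_mem measurableSet_Ioo, hjumps.ae_notMem _] with t ht hjump
  refine tendsto_quantile_of_tendsto_cdf hcdf ht fun z hz => ?_
  by_contra! h
  exact hjump ⟨ht, z, hz, fun t' ht' htt' => h t' ht' htt'⟩

section Potential

variable {μ : Measure ℝ}

lemma integrable_abs_sub_iff [IsFiniteMeasure μ] (y : ℝ) :
    Integrable (fun x => |y - x|) μ ↔ Integrable (fun x => |x|) μ := by
  constructor <;> intro h <;>
    refine (h.add (integrable_const |y|)).mono' (by fun_prop) (.of_forall fun x => ?_)
  · rw [Real.norm_eq_abs, abs_abs, Pi.add_apply]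
    linarith [abs_sub_abs_le_abs_sub x y, abs_sub_comm x y]
  · rw [Real.norm_eq_abs, abs_abs, Pi.add_apply]
    linarith [abs_sub y x]

lemma abs_sub_integral_le_pot [IsProbabilityMeasure μ] (hμ : Integrable (fun x => |x|) μ)
    (y : ℝ) : |y - ∫ x, x ∂μ| ≤ pot μ y := by
  have hid : Integrable (fun x => x) μ := (integrable_norm_iff aestronglyMeasurable_id).1 hμ
  calc |y - ∫ x, x ∂μ| = |∫ x, (y - x) ∂μ| := by
        rw [integral_sub (integrable_const y) hid, integral_const, probReal_univ, one_smul]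
    _ ≤ pot μ y := abs_integral_le_integral_abs

lemma integrable_abs_of_abs_sub_le_pot [IsFiniteMeasure μ] {m : ℝ}
    (h : ∀ y, |y - m| ≤ pot μ y) : Integrable (fun x => |x|) μ := by
  -- with an infinite first moment `pot μ` would be the junk value `0`
  by_contra hμ
  have := h (m + 1)
  rw [pot, integral_undef (mt (integrable_abs_sub_iff (m + 1)).1 hμ)] at this
  norm_num at this

lemma pot_sub_pot_mem_Icc [IsProbabilityMeasure μ] (hμ : Integrable (fun x => |x|) μ)
    {x z : ℝ} (hxz : x ≤ z) :
    pot μ z - pot μ x ∈ Icc ((2 * cdf μ x - 1) * (z - x)) ((2 * cdf μ z - 1) * (z - x)) := by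
  have hint (y : ℝ) := (integrable_abs_sub_iff y).2 hμ
  have hstep (y : ℝ) :
      Integrable (fun w => (Iic y).indicator (fun _ => 2 * (z - x)) w - (z - x)) μ :=
    ((integrable_const _).indicator measurableSet_Iic).sub (integrable_const _)
  have hcdf (y : ℝ) : ∫ w, ((Iic y).indicator (fun _ => 2 * (z - x)) w - (z - x)) ∂μ
      = (2 * cdf μ y - 1) * (z - x) := by
    rw [integral_sub ((integrable_const _).indicator measurableSet_Iic) (integrable_const _),
      integral_indicator_const _ measurableSet_Iic, integral_const, cdf_eq_real]
    simp only [probReal_univ, smul_eq_mul]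
    ring
  have hlip (w : ℝ) : |(|z - w| - |x - w|)| ≤ z - x :=
    (abs_abs_sub_abs_le_abs_sub _ _).trans_eq
      (by rw [sub_sub_sub_cancel_right, abs_of_nonneg (sub_nonneg.2 hxz)])
  rw [pot, pot, ← integral_sub (hint z) (hint x), ← hcdf x, ← hcdf z]
  refine ⟨integral_mono (hstep x) ((hint z).sub (hint x)) fun w => ?_,
    integral_mono ((hint z).sub (hint x)) (hstep z) fun w => ?_⟩
  · by_cases hw : w ≤ x
    · simp only [indicator_of_mem (mem_Iic.2 hw), abs_of_nonneg (sub_nonneg.2 hw),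
        abs_of_nonneg (sub_nonneg.2 (hw.trans hxz))]
      linarith
    · simp only [indicator_of_notMem (show w ∉ Iic x from hw)]
      linarith [abs_le.1 (hlip w)]
  · by_cases hw : w ≤ z
    · simp only [indicator_of_mem (mem_Iic.2 hw)]
      linarith [abs_le.1 (hlip w)]
    · rw [not_le] at hw
      simp only [indicator_of_notMem (show w ∉ Iic z from hw.not_ge),
        abs_of_neg (sub_neg.2 hw), abs_of_neg (sub_neg.2 (hxz.trans_lt hw))]
      linarith

lemma tendsto_cdf_of_tendsto_pot {ι : Type*} {l : Filter ι} {μs : ι → Measure ℝ}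
    [∀ i, IsProbabilityMeasure (μs i)] [IsProbabilityMeasure μ]
    (hμs : ∀ i, Integrable (fun x => |x|) (μs i)) (hμ : Integrable (fun x => |x|) μ)
    (hpot : ∀ y, Tendsto (fun i => pot (μs i) y) l (𝓝 (pot μ y)))
    {y : ℝ} (hy : ContinuousAt (cdf μ) y) :
    Tendsto (fun i => cdf (μs i) y) l (𝓝 (cdf μ y)) := by
  -- The slopes of `pot` bracket `2 * cdf - 1`, and they converge along with `pot`.
  refine tendsto_order.2 ⟨fun a ha => ?_, fun b hb => ?_⟩
  · obtain ⟨x, hax, hxy⟩ := (((hy.mono_left nhdsWithin_le_nhds).eventually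
      (lt_mem_nhds ha)).and (self_mem_nhdsWithin (s := Iio y))).exists
    have hlim : (2 * a - 1) * (y - x) < pot μ y - pot μ x :=
      (mul_lt_mul_of_pos_right (by linarith) (sub_pos.2 hxy)).trans_le
        (pot_sub_pot_mem_Icc hμ hxy.le).1
    filter_upwards [((hpot y).sub (hpot x)).eventually_const_lt hlim] with i hi
    have := lt_of_mul_lt_mul_right (hi.trans_le (pot_sub_pot_mem_Icc (hμs i) hxy.le).2)
      (sub_nonneg.2 hxy.le)
    linarith
  · obtain ⟨z, hzb, hyz⟩ := (((hy.mono_left nhdsWithin_le_nhds).eventually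
      (gt_mem_nhds hb)).and (self_mem_nhdsWithin (s := Ioi y))).exists
    have hlim : pot μ z - pot μ y < (2 * b - 1) * (z - y) :=
      (pot_sub_pot_mem_Icc hμ hyz.le).2.trans_lt
        (mul_lt_mul_of_pos_right (by linarith) (sub_pos.2 hyz))
    filter_upwards [((hpot z).sub (hpot y)).eventually_lt_const hlim] with i hi
    have := lt_of_mul_lt_mul_right ((pot_sub_pot_mem_Icc (hμs i) hyz.le).1.trans_lt hi)
      (sub_nonneg.2 hyz.le)
    linarith

end Potential

section Wasserstein

variable {μ ν : Measure ℝ}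

lemma W1R_nonneg (μ ν : Measure ℝ) : 0 ≤ W1R μ ν :=
  Real.sInf_nonneg fun _ ⟨_, _, _, hc⟩ => hc ▸ integral_nonneg fun _ => abs_nonneg _

lemma W1R_le_integral {π : Measure (ℝ × ℝ)} (h₁ : π.map Prod.fst = μ) (h₂ : π.map Prod.snd = ν) :
    W1R μ ν ≤ ∫ p, |p.1 - p.2| ∂π :=
  csInf_le ⟨0, fun _ ⟨_, _, _, hc⟩ => hc ▸ integral_nonneg fun _ => abs_nonneg _⟩ ⟨π, h₁, h₂, rfl⟩

lemma abs_pot_sub_pot_le_W1R [IsProbabilityMeasure μ] [IsProbabilityMeasure ν]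
    (hμ : Integrable (fun x => |x|) μ) (hν : Integrable (fun x => |x|) ν) (y : ℝ) :
    |pot μ y - pot ν y| ≤ W1R μ ν := by
  refine le_csInf ⟨_, μ.prod ν, by simp, by simp, rfl⟩ ?_
  rintro _ ⟨π, h₁, h₂, rfl⟩
  have marginal {f : ℝ × ℝ → ℝ} {α : Measure ℝ} [IsFiniteMeasure α] (hf : Measurable f)
      (hπ : π.map f = α) (hα : Integrable (fun x => |x|) α) :
      Integrable (fun p => |y - f p|) π ∧ pot α y = ∫ p, |y - f p| ∂π := by
    subst hπ
    exact ⟨(integrable_map_measure (by fun_prop) hf.aemeasurable).1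
      ((integrable_abs_sub_iff y).2 hα), integral_map hf.aemeasurable (by fun_prop)⟩
  obtain ⟨hint₁, hpot₁⟩ := marginal measurable_fst h₁ hμ
  obtain ⟨hint₂, hpot₂⟩ := marginal measurable_snd h₂ hν
  have hcost : Integrable (fun p : ℝ × ℝ => |p.1 - p.2|) π :=
    (hint₁.add hint₂).mono' (by fun_prop) (.of_forall fun p => by
      rw [Real.norm_eq_abs, abs_abs, Pi.add_apply]
      linarith [abs_sub_le p.1 y p.2, abs_sub_comm p.1 y])
  rw [hpot₁, hpot₂, ← integral_sub hint₁ hint₂]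
  refine abs_integral_le_integral_abs.trans
    (integral_mono_of_nonneg (.of_forall fun _ => abs_nonneg _) hcost (.of_forall fun p => ?_))
  calc |(|y - p.1| - |y - p.2|)| ≤ |(y - p.1) - (y - p.2)| := abs_abs_sub_abs_le_abs_sub _ _
    _ = |p.1 - p.2| := by rw [sub_sub_sub_cancel_left, abs_sub_comm]

lemma tendstoUniformly_pot_of_tendsto_W1R {ι : Type*} {l : Filter ι} {μs : ι → Measure ℝ}
    [∀ i, IsProbabilityMeasure (μs i)] [IsProbabilityMeasure μ]
    (hμs : ∀ i, Integrable (fun x => |x|) (μs i)) (hμ : Integrable (fun x => |x|) μ)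
    (hW : Tendsto (fun i => W1R (μs i) μ) l (𝓝 0)) :
    TendstoUniformly (fun i => pot (μs i)) (pot μ) l := by
  rw [Metric.tendstoUniformly_iff]
  intro ε hε
  filter_upwards [hW.eventually_lt_const hε] with i hi y
  rw [Real.dist_eq, abs_sub_comm]
  exact (abs_pot_sub_pot_le_W1R (hμs i) hμ y).trans_lt hi

lemma W1R_le_integral_abs_quantile_sub (μ ν : Measure ℝ) [IsProbabilityMeasure μ]
    [IsProbabilityMeasure ν] : W1R μ ν ≤ ∫ t in Ioo 0 1, |quantile μ t - quantile ν t| := by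
  have hpair := (aemeasurable_quantile μ).prodMk (aemeasurable_quantile ν)
  convert W1R_le_integral (π := (volume.restrict (Ioo 0 1)).map
    fun t => (quantile μ t, quantile ν t)) ?_ ?_ using 1
  · rw [integral_map hpair (by fun_prop)]
  · rw [AEMeasurable.map_map_of_aemeasurable measurable_fst.aemeasurable hpair]
    exact map_quantile μ
  · rw [AEMeasurable.map_map_of_aemeasurable measurable_snd.aemeasurable hpair]
    exact map_quantile ν

theorem tendsto_W1R_zero_of_tendsto_pot {ι : Type*} {l : Filter ι} [l.IsCountablyGenerated]
    {μs : ι → Measure ℝ} [∀ i, IsProbabilityMeasure (μs i)] [IsProbabilityMeasure μ]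
    (hμs : ∀ i, Integrable (fun x => |x|) (μs i)) (hμ : Integrable (fun x => |x|) μ)
    (hpot : ∀ y, Tendsto (fun i => pot (μs i) y) l (𝓝 (pot μ y))) :
    Tendsto (fun i => W1R (μs i) μ) l (𝓝 0) := by
  have hae := ae_tendsto_quantile_of_tendsto_cdf fun x hx =>
    tendsto_cdf_of_tendsto_pot hμs hμ hpot hx
  have hnorm (α : Measure ℝ) [IsProbabilityMeasure α] :
      ∫ t in Ioo 0 1, ‖quantile α t‖ = pot α 0 := by
    rw [integral_norm_quantile]
    simp [pot]
  refine squeeze_zero (fun i => W1R_nonneg _ _) (fun i => W1R_le_integral_abs_quantile_sub _ _) ?_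
  refine tendsto_integral_norm_sub_of_tendsto_integral_norm (fun i => integrable_quantile (hμs i))
    (integrable_quantile hμ) hae ?_
  simpa only [hnorm] using hpot 0

end Wasserstein

lemma TendstoUniformly.min {ι α : Type*} {l : Filter ι} {F G : ι → α → ℝ} {f g : α → ℝ}
    (hF : TendstoUniformly F f l) (hG : TendstoUniformly G g l) :
    TendstoUniformly (fun i x => min (F i x) (G i x)) (fun x => min (f x) (g x)) l := by
  rw [Metric.tendstoUniformly_iff] at *
  intro ε hε
  filter_upwards [hF ε hε, hG ε hε] with i hFi hGi x
  rw [Real.dist_eq] at *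
  exact (abs_min_sub_min_le_max _ _ _ _).trans_lt (max_lt (hFi x) (hGi x))

section ConvexEnvelope

lemma le_coFun {f g : ℝ → ℝ} (hg : ConvexOn ℝ univ g) (hgf : ∀ z, g z ≤ f z) (y : ℝ) :
    g y ≤ coFun f y :=
  le_csSup ⟨f y, by rintro _ ⟨h, -, hhf, rfl⟩; exact hhf y⟩ ⟨g, hg, hgf, rfl⟩

lemma coFun_le_add_of_le_add {f₁ f₂ : ℝ → ℝ} {ε : ℝ}
    (h₁ : ∃ g, ConvexOn ℝ univ g ∧ ∀ z, g z ≤ f₁ z) (h : ∀ z, f₁ z ≤ f₂ z + ε) (y : ℝ) :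
    coFun f₁ y ≤ coFun f₂ y + ε := by
  obtain ⟨g, hg, hgf⟩ := h₁
  refine csSup_le ⟨g y, g, hg, hgf, rfl⟩ ?_
  rintro _ ⟨g', hg', hg'f, rfl⟩
  have hconv : ConvexOn ℝ univ fun z => g' z - ε := hg'.sub (concaveOn_const ε convex_univ)
  have := le_coFun (f := f₂) hconv (fun z => by linarith [hg'f z, h z]) y
  linarith

lemma abs_coFun_sub_coFun_le {f₁ f₂ : ℝ → ℝ} {ε : ℝ} (h : ∀ z, |f₁ z - f₂ z| ≤ ε) (y : ℝ) :
    |coFun f₁ y - coFun f₂ y| ≤ ε := by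
  have minorant_of_le_add {f f' : ℝ → ℝ} (hff' : ∀ z, f z ≤ f' z + ε) :
      (∃ g, ConvexOn ℝ univ g ∧ ∀ z, g z ≤ f z) → ∃ g, ConvexOn ℝ univ g ∧ ∀ z, g z ≤ f' z :=
    fun ⟨g, hg, hgf⟩ => ⟨fun z => g z - ε, hg.sub (concaveOn_const ε convex_univ),
      fun z => by linarith [hgf z, hff' z]⟩
  by_cases h₁ : ∃ g, ConvexOn ℝ univ g ∧ ∀ z, g z ≤ f₁ z
  · have h₂ := minorant_of_le_add (f' := f₂) (fun z => by linarith [abs_le.1 (h z)]) h₁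
    have h₁₂ := coFun_le_add_of_le_add (f₂ := f₂) h₁ (fun z => by linarith [abs_le.1 (h z)]) y
    have h₂₁ := coFun_le_add_of_le_add (f₂ := f₁) h₂ (fun z => by linarith [abs_le.1 (h z)]) y
    rw [abs_le]
    constructor <;> linarith
  · -- Without convex minorants both envelopes are the junk value `sSup ∅ = 0`.
    have h₂ : ¬∃ g, ConvexOn ℝ univ g ∧ ∀ z, g z ≤ f₂ z :=
      mt (minorant_of_le_add fun z => by linarith [abs_le.1 (h z)]) h₁
    have hzero {f : ℝ → ℝ} (hf : ¬∃ g, ConvexOn ℝ univ g ∧ ∀ z, g z ≤ f z) : coFun f y = 0 := by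
      refine (congrArg sSup (Set.eq_empty_of_forall_notMem ?_)).trans Real.sSup_empty
      rintro _ ⟨g, hg, hgf, -⟩
      exact hf ⟨g, hg, hgf⟩
    rw [hzero h₁, hzero h₂, sub_zero, abs_zero]
    exact (abs_nonneg _).trans (h 0)

lemma TendstoUniformly.tendsto_coFun {ι : Type*} {l : Filter ι} {F : ι → ℝ → ℝ} {f : ℝ → ℝ}
    (hF : TendstoUniformly F f l) (y : ℝ) :
    Tendsto (fun i => coFun (F i) y) l (𝓝 (coFun f y)) := by
  rw [Metric.tendstoUniformly_iff] at hF
  refine Metric.tendsto_nhds.2 fun ε hε => ?_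
  filter_upwards [hF (ε / 2) (half_pos hε)] with i hi
  have hclose (z : ℝ) : |F i z - f z| ≤ ε / 2 := by
    rw [← Real.dist_eq, dist_comm]
    exact (hi z).le
  rw [Real.dist_eq]
  exact (abs_coFun_sub_coFun_le hclose y).trans_lt (half_lt_self hε)

end ConvexEnvelope

/-- Continuity of the convex-order supremum and infimum (characterised via potential
functions) under `W_1`-convergence, for probability measures with common barycentre. -/
theorem stmt10 (μ ν : Measure ℝ) (μk νk σk ιk : ℕ → Measure ℝ) (σ ι : Measure ℝ) (m₁ : ℝ)
    [IsProbabilityMeasure μ] [IsProbabilityMeasure ν]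
    [∀ k, IsProbabilityMeasure (μk k)] [∀ k, IsProbabilityMeasure (νk k)]
    [IsProbabilityMeasure σ] [IsProbabilityMeasure ι]
    [∀ k, IsProbabilityMeasure (σk k)] [∀ k, IsProbabilityMeasure (ιk k)]
    (hμi : Integrable (fun x => |x|) μ) (hνi : Integrable (fun x => |x|) ν)
    (hμki : ∀ k, Integrable (fun x => |x|) (μk k))
    (hνki : ∀ k, Integrable (fun x => |x|) (νk k))
    (hbμ : ∫ x, x ∂μ = m₁) (hbν : ∫ x, x ∂ν = m₁)
    (hbμk : ∀ k, ∫ x, x ∂(μk k) = m₁) (hbνk : ∀ k, ∫ x, x ∂(νk k) = m₁)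
    (hWμ : Filter.Tendsto (fun k => W1R (μk k) μ) Filter.atTop (nhds 0))
    (hWν : Filter.Tendsto (fun k => W1R (νk k) ν) Filter.atTop (nhds 0))
    (hσk : ∀ k y, pot (σk k) y = max (pot (μk k) y) (pot (νk k) y))
    (hσ : ∀ y, pot σ y = max (pot μ y) (pot ν y))
    (hιk : ∀ k y, pot (ιk k) y = coFun (fun z => min (pot (μk k) z) (pot (νk k) z)) y)
    (hι : ∀ y, pot ι y = coFun (fun z => min (pot μ z) (pot ν z)) y) :
    Filter.Tendsto (fun k => W1R (σk k) σ) Filter.atTop (nhds 0) ∧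
      Filter.Tendsto (fun k => W1R (ιk k) ι) Filter.atTop (nhds 0) := by
  have hUμ := tendstoUniformly_pot_of_tendsto_W1R hμki hμi hWμ
  have hUν := tendstoUniformly_pot_of_tendsto_W1R hνki hνi hWν
  have jensen {α : Measure ℝ} [IsProbabilityMeasure α] (hα : Integrable (fun x => |x|) α)
      (hm : ∫ x, x ∂α = m₁) (y : ℝ) : |y - m₁| ≤ pot α y :=
    hm ▸ abs_sub_integral_le_pot hα y
  have hconv : ConvexOn ℝ univ fun z => |z - m₁| := by
    simpa only [Real.dist_eq] using convexOn_univ_dist m₁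
  constructor
  · have hσlow (y : ℝ) : |y - m₁| ≤ pot σ y := by
      rw [hσ]; exact le_max_of_le_left (jensen hμi hbμ y)
    have hσklow (k : ℕ) (y : ℝ) : |y - m₁| ≤ pot (σk k) y := by
      rw [hσk]; exact le_max_of_le_left (jensen (hμki k) (hbμk k) y)
    refine tendsto_W1R_zero_of_tendsto_pot (fun k => integrable_abs_of_abs_sub_le_pot (hσklow k))
      (integrable_abs_of_abs_sub_le_pot hσlow) fun y => ?_
    simpa only [hσk, hσ] using (hUμ.tendsto_at y).max (hUν.tendsto_at y)
  · have hιlow (y : ℝ) : |y - m₁| ≤ pot ι y := by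
      rw [hι]; exact le_coFun hconv (fun z => le_min (jensen hμi hbμ z) (jensen hνi hbν z)) y
    have hιklow (k : ℕ) (y : ℝ) : |y - m₁| ≤ pot (ιk k) y := by
      rw [hιk]
      exact le_coFun hconv
        (fun z => le_min (jensen (hμki k) (hbμk k) z) (jensen (hνki k) (hbνk k) z)) y
    refine tendsto_W1R_zero_of_tendsto_pot (fun k => integrable_abs_of_abs_sub_le_pot (hιklow k))
      (integrable_abs_of_abs_sub_le_pot hιlow) fun y => ?_
    simpa only [hιk, hι] using (hUμ.min hUν).tendsto_coFun y
end

section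
/- Let X, Y be Polish spaces, r ≥ 1, and μ^k, ν^k, μ, ν probability measures (μ's on X, ν's on Y) with finite r-th moments such that W_r(μ^k, μ) → 0 and W_r(ν^k, ν) → 0. For any coupling π ∈ Π(μ, ν), the couplings π^k defined by gluing W_r-optimal couplings η^k ∈ Π(μ^k, μ) and τ^k ∈ Π(ν, ν^k) with π, i.e. π^k(dx^k, dy^k) = ∫ η^k(dx^k, dx) π_x(dy) τ^k_y(dy^k), satisfy π^k ∈ Π(μ^k, ν^k) and W_r^r(π, π^k) ≤ W_r^r(μ, μ^k) + W_r^r(ν, ν^k) when X×Y carries the metric ((x,y),(x',y')) ↦ (d_X(x,x')^r + d_Y(y,y')^r)^{1/r}. -/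
/-!
Draw `(xₖ, x) ~ ηᵏ`, then `y ~ π_x`, then `yₖ ~ τᵏ_y`. Since `x ~ μ`, the pair `(x, y)` has law `π`;
hence `y ~ ν`, so `(y, yₖ)` has law `τᵏ` by disintegration, while `(xₖ, yₖ)` has law `πᵏ`. The law
of `((x, y), (xₖ, yₖ))` therefore couples `π` with `πᵏ`, and its cost for `d_X^r + d_Y^r` splits
into the costs of the optimal couplings `ηᵏ` and `τᵏ`, that is `W_r^r(μᵏ, μ) = W_r^r(μ, μᵏ)` and
`W_r^r(ν, νᵏ)`.
-/

open MeasureTheory ProbabilityTheory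

/-- `W_r^r(μ,ν) = inf { ∫ d(x,y)^r dπ : π ∈ Π(μ,ν) }`. -/
noncomputable def WrRpow {X : Type*} [MetricSpace X] [MeasurableSpace X]
    (r : ℝ) (μ ν : Measure X) : ℝ :=
  sInf {c : ℝ | ∃ π : Measure (X × X), π.map Prod.fst = μ ∧ π.map Prod.snd = ν ∧
    c = ∫ p, dist p.1 p.2 ^ r ∂π}

lemma ProbabilityTheory.Kernel.id_prod_apply {α β : Type*} [MeasurableSpace α]
    [MeasurableSpace β] (κ : Kernel α β) [IsSFiniteKernel κ] (a : α) :
    (Kernel.id ×ₖ κ) a = (κ a).map (Prod.mk a) := by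
  rw [Kernel.prod_apply, Kernel.id_apply, Measure.dirac_prod]

namespace MeasureTheory.Measure

variable {α β γ δ : Type*} [MeasurableSpace α] [MeasurableSpace β] [MeasurableSpace γ]
  [MeasurableSpace δ]

lemma bind_map {m : Measure α} {f : β → Measure γ} {g : α → β} (hf : Measurable f)
    (hg : Measurable g) : (m.map g).bind f = m.bind (f ∘ g) := by
  ext s hs
  rw [bind_apply hs hf.aemeasurable, bind_apply hs (hf.comp hg).aemeasurable]
  exact lintegral_map (measurable_coe hs |>.comp hf) hg

lemma compProd_prodMkLeft_map_snd (ρ : Measure (α × β)) [SFinite ρ] (κ : Kernel β γ)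
    [IsSFiniteKernel κ] :
    (ρ ⊗ₘ κ.prodMkLeft α).map (fun w => (w.1.2, w.2)) = ρ.snd ⊗ₘ κ := by
  rw [compProd_eq_comp_prod, map_comp _ _ (by fun_prop), compProd_eq_comp_prod, snd,
    bind_map (Kernel.measurable _) measurable_snd]
  congr 1
  funext p
  rw [Kernel.map_apply _ (by fun_prop), Kernel.id_prod_apply, Kernel.prodMkLeft_apply,
    Function.comp_apply, Kernel.id_prod_apply, map_map (by fun_prop) measurable_prodMk_left]
  rfl

/-- The law of `(((a, b), c), d)` when `(a, b) ~ η`, `c ~ κ b` and `d ~ ξ c`. -/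
noncomputable def glue (η : Measure (α × β)) (κ : Kernel β γ) (ξ : Kernel γ δ) :
    Measure (((α × β) × γ) × δ) :=
  (η ⊗ₘ κ.prodMkLeft α) ⊗ₘ ξ.prodMkLeft (α × β)

section Glue

variable (η : Measure (α × β)) [SFinite η] (κ : Kernel β γ) [IsMarkovKernel κ]
  (ξ : Kernel γ δ) [IsMarkovKernel ξ]

lemma glue_map_ab : (η.glue κ ξ).map (fun w => w.1.1) = η := by
  have h : (η.glue κ ξ).map (fun w => w.1.1) = (η.glue κ ξ).fst.fst :=
    (map_map measurable_fst measurable_fst).symm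
  rw [h, glue, fst_compProd, fst_compProd]

lemma glue_map_bc : (η.glue κ ξ).map (fun w => (w.1.1.2, w.1.2)) = η.snd ⊗ₘ κ := by
  have h : (η.glue κ ξ).map (fun w => (w.1.1.2, w.1.2)) =
      (η.glue κ ξ).fst.map (fun w => (w.1.2, w.2)) :=
    (map_map (measurable_fst.snd.prodMk measurable_snd) measurable_fst).symm
  rw [h, glue, fst_compProd]
  exact compProd_prodMkLeft_map_snd η κ

lemma glue_map_cd : (η.glue κ ξ).map (fun w => (w.1.2, w.2)) = (κ ∘ₘ η.snd) ⊗ₘ ξ := by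
  rw [glue, compProd_prodMkLeft_map_snd]
  have h : (η ⊗ₘ κ.prodMkLeft α).snd =
      ((η ⊗ₘ κ.prodMkLeft α).map (fun w => (w.1.2, w.2))).snd :=
    (map_map measurable_snd (measurable_fst.snd.prodMk measurable_snd)).symm
  rw [h, compProd_prodMkLeft_map_snd, snd_compProd]

lemma glue_map_ad :
    (η.glue κ ξ).map (fun w => (w.1.1.1, w.2)) =
      η.bind fun q => (κ q.2).bind fun c => (ξ c).map fun d => (q.1, d) := by
  rw [glue, compProd_eq_comp_prod, map_comp _ _ (by fun_prop), compProd_eq_comp_prod,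
    comp_assoc]
  congr 1
  funext q
  rw [Kernel.comp_apply, Kernel.id_prod_apply, Kernel.prodMkLeft_apply,
    bind_map (Kernel.measurable _) measurable_prodMk_left]
  congr 1
  funext c
  rw [Function.comp_apply, Kernel.map_apply _ (by fun_prop), Kernel.id_prod_apply,
    Kernel.prodMkLeft_apply, map_map (by fun_prop) measurable_prodMk_left]
  rfl

end Glue

lemma exists_coupling_glue (η : Measure (α × β)) [SFinite η] (π : Measure (β × γ))
    [IsFiniteMeasure π] [StandardBorelSpace γ] [Nonempty γ] (τ : Measure (γ × δ))
    [IsFiniteMeasure τ] [StandardBorelSpace δ] [Nonempty δ] (hη : η.snd = π.fst)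
    (hτ : τ.fst = π.snd) :
    let πk := η.bind fun q =>
      (π.condKernel q.2).bind fun c => (τ.condKernel c).map fun d => (q.1, d)
    (πk.fst = η.fst ∧ πk.snd = τ.snd) ∧
      ∃ ρ : Measure ((β × γ) × (α × δ)), ρ.fst = π ∧ ρ.snd = πk ∧
        ρ.map (fun w => (w.1.1, w.2.1)) = η.map Prod.swap ∧
        ρ.map (fun w => (w.1.2, w.2.2)) = τ := by
  intro πk
  set M := η.glue π.condKernel τ.condKernel
  have hab : M.map (fun w => w.1.1) = η := glue_map_ab ..
  have hbc : M.map (fun w => (w.1.1.2, w.1.2)) = π := by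
    rw [glue_map_bc, hη, π.disintegrate]
  have hcd : M.map (fun w => (w.1.2, w.2)) = τ := by
    rw [glue_map_cd, hη, ← snd_compProd, π.disintegrate, ← hτ, τ.disintegrate]
  have had : M.map (fun w => (w.1.1.1, w.2)) = πk := glue_map_ad ..
  refine ⟨⟨?_, ?_⟩, M.map fun w => ((w.1.1.2, w.1.2), (w.1.1.1, w.2)), ?_, ?_, ?_, ?_⟩
  · rw [← had, ← hab, fst, fst, map_map measurable_fst (by fun_prop),
      map_map measurable_fst (by fun_prop)]
    rfl
  · rw [← had, ← hcd, snd, snd, map_map measurable_snd (by fun_prop),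
      map_map measurable_snd (by fun_prop)]
    rfl
  · rw [← hbc, fst, map_map measurable_fst (by fun_prop)]
    rfl
  · rw [← had, snd, map_map measurable_snd (by fun_prop)]
    rfl
  · rw [← hab, map_map (by fun_prop) (by fun_prop), map_map (by fun_prop) (by fun_prop)]
    rfl
  · rw [← hcd, map_map (by fun_prop) (by fun_prop)]
    rfl

end MeasureTheory.Measure

lemma dist_rpow_le_two_rpow_mul {X : Type*} [PseudoMetricSpace X] {r : ℝ} (hr : 0 ≤ r)
    (a b z : X) : dist a b ^ r ≤ 2 ^ r * (dist a z ^ r + dist b z ^ r) := by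
  have hmax : dist a b ≤ 2 * max (dist a z) (dist b z) := by
    linarith [dist_triangle_right a b z, le_max_left (dist a z) (dist b z),
      le_max_right (dist a z) (dist b z)]
  calc dist a b ^ r ≤ (2 * max (dist a z) (dist b z)) ^ r := by gcongr
    _ = 2 ^ r * max (dist a z) (dist b z) ^ r := by
      rw [Real.mul_rpow zero_le_two (le_max_of_le_left dist_nonneg)]
    _ ≤ 2 ^ r * (dist a z ^ r + dist b z ^ r) := by
      gcongr
      rcases le_total (dist a z) (dist b z) with h | h
      · rw [max_eq_right h]; exact le_add_of_nonneg_left (by positivity)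
      · rw [max_eq_left h]; exact le_add_of_nonneg_right (by positivity)

section Cost

variable {X Y : Type*} [PseudoMetricSpace X] [MeasurableSpace X] [PseudoMetricSpace Y]
  [MeasurableSpace Y]

lemma integral_dist_rpow_map_swap (r : ℝ) (p : Measure (X × X)) :
    ∫ q, dist q.1 q.2 ^ r ∂(p.map Prod.swap) = ∫ q, dist q.1 q.2 ^ r ∂p := by
  rw [show (Prod.swap : X × X → X × X) = MeasurableEquiv.prodComm from rfl, integral_map_equiv]
  exact integral_congr_ae (ae_of_all _ fun q => congrArg (· ^ r) (dist_comm q.2 q.1))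

variable [SecondCountableTopology X] [OpensMeasurableSpace X] [SecondCountableTopology Y]
  [OpensMeasurableSpace Y]

lemma integrable_dist_rpow_of_integrable_fst_snd {r : ℝ} (hr : 0 ≤ r) (x₀ : X)
    {E : Measure (X × X)} (h₁ : Integrable (fun x => dist x x₀ ^ r) E.fst)
    (h₂ : Integrable (fun x => dist x x₀ ^ r) E.snd) :
    Integrable (fun q : X × X => dist q.1 q.2 ^ r) E := by
  have hm : Measurable fun x => dist x x₀ ^ r := (measurable_id.dist measurable_const).pow_const r
  rw [Measure.fst, integrable_map_measure hm.aestronglyMeasurable measurable_fst.aemeasurable] at h₁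
  rw [Measure.snd, integrable_map_measure hm.aestronglyMeasurable measurable_snd.aemeasurable] at h₂
  refine ((h₁.add h₂).const_mul (2 ^ r)).mono'
    (measurable_dist.pow_const r).aestronglyMeasurable (ae_of_all _ fun q => ?_)
  rw [Real.norm_of_nonneg (by positivity)]
  exact dist_rpow_le_two_rpow_mul hr q.1 q.2 x₀

lemma integral_dist_rpow_add_dist_rpow {r : ℝ} {ρ : Measure ((X × Y) × (X × Y))}
    (hX : Integrable (fun p : X × X => dist p.1 p.2 ^ r) (ρ.map fun q => (q.1.1, q.2.1)))
    (hY : Integrable (fun p : Y × Y => dist p.1 p.2 ^ r) (ρ.map fun q => (q.1.2, q.2.2))) :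
    ∫ q, (dist q.1.1 q.2.1 ^ r + dist q.1.2 q.2.2 ^ r) ∂ρ =
      ∫ p, dist p.1 p.2 ^ r ∂(ρ.map fun q => (q.1.1, q.2.1)) +
        ∫ p, dist p.1 p.2 ^ r ∂(ρ.map fun q => (q.1.2, q.2.2)) := by
  have hmX : Measurable fun p : X × X => dist p.1 p.2 ^ r := measurable_dist.pow_const r
  have hmY : Measurable fun p : Y × Y => dist p.1 p.2 ^ r := measurable_dist.pow_const r
  rw [integrable_map_measure hmX.aestronglyMeasurable (by fun_prop)] at hX
  rw [integrable_map_measure hmY.aestronglyMeasurable (by fun_prop)] at hY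
  rw [integral_map (by fun_prop) hmX.aestronglyMeasurable,
    integral_map (by fun_prop) hmY.aestronglyMeasurable]
  exact integral_add hX hY

end Cost

lemma WrRpow_comm {X : Type*} [MetricSpace X] [MeasurableSpace X] (r : ℝ) (μ ν : Measure X) :
    WrRpow r μ ν = WrRpow r ν μ := by
  have swap (p : Measure (X × X)) : (p.map Prod.swap).map Prod.fst = p.map Prod.snd ∧
      (p.map Prod.swap).map Prod.snd = p.map Prod.fst ∧
      ∫ q, dist q.1 q.2 ^ r ∂(p.map Prod.swap) = ∫ q, dist q.1 q.2 ^ r ∂p :=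
    ⟨Measure.fst_map_swap, Measure.snd_map_swap, integral_dist_rpow_map_swap r p⟩
  unfold WrRpow
  congr 1
  ext c
  constructor <;> rintro ⟨p, rfl, rfl, rfl⟩ <;>
    exact ⟨p.map Prod.swap, (swap p).1, (swap p).2.1, (swap p).2.2.symm⟩

theorem stmt15_general {X Y : Type*}
    [MetricSpace X] [SecondCountableTopology X]
    [MeasurableSpace X] [BorelSpace X]
    [MetricSpace Y] [CompleteSpace Y] [SecondCountableTopology Y]
    [MeasurableSpace Y] [BorelSpace Y] [Nonempty Y]
    (r : ℝ) (hr : 1 ≤ r) (x₀ : X) (y₀ : Y)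
    (μ : Measure X) (ν : Measure Y) (μk : ℕ → Measure X) (νk : ℕ → Measure Y)
    (hmomμ : Integrable (fun x => dist x x₀ ^ r) μ)
    (hmomν : Integrable (fun y => dist y y₀ ^ r) ν)
    (hmomμk : ∀ k, Integrable (fun x => dist x x₀ ^ r) (μk k))
    (hmomνk : ∀ k, Integrable (fun y => dist y y₀ ^ r) (νk k))
    (π : Measure (X × Y)) [IsProbabilityMeasure π]
    (hπ1 : π.map Prod.fst = μ) (hπ2 : π.map Prod.snd = ν)
    (η : ℕ → Measure (X × X)) [∀ k, IsFiniteMeasure (η k)]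
    (hη1 : ∀ k, (η k).map Prod.fst = μk k) (hη2 : ∀ k, (η k).map Prod.snd = μ)
    (hηopt : ∀ k, ∫ p, dist p.1 p.2 ^ r ∂(η k) = WrRpow r (μk k) μ)
    (τ : ℕ → Measure (Y × Y)) [∀ k, IsFiniteMeasure (τ k)]
    (hτ1 : ∀ k, (τ k).map Prod.fst = ν) (hτ2 : ∀ k, (τ k).map Prod.snd = νk k)
    (hτopt : ∀ k, ∫ p, dist p.1 p.2 ^ r ∂(τ k) = WrRpow r ν (νk k)) :
    ∀ k, letI πk : Measure (X × Y) :=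
        (η k).bind (fun q : X × X =>
          (π.condKernel q.2).bind (fun y : Y =>
            ((τ k).condKernel y).map (fun yk : Y => (q.1, yk))))
      (πk.map Prod.fst = μk k ∧ πk.map Prod.snd = νk k) ∧
        sInf {c : ℝ | ∃ ρ : Measure ((X × Y) × (X × Y)),
            ρ.map Prod.fst = π ∧ ρ.map Prod.snd = πk ∧
            c = ∫ q, (dist q.1.1 q.2.1 ^ r + dist q.1.2 q.2.2 ^ r) ∂ρ}
          ≤ WrRpow r μ (μk k) + WrRpow r ν (νk k) := by
  intro k
  obtain ⟨⟨hπk₁, hπk₂⟩, ρ, hρ₁, hρ₂, hρX, hρY⟩ := Measure.exists_coupling_glue (η k) π (τ k)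
    ((hη2 k).trans hπ1.symm) ((hτ1 k).trans hπ2.symm)
  refine ⟨⟨hπk₁.trans (hη1 k), hπk₂.trans (hτ2 k)⟩, csInf_le ⟨0, ?_⟩ ⟨ρ, hρ₁, hρ₂, ?_⟩⟩
  · rintro _ ⟨ρ', -, -, rfl⟩
    exact integral_nonneg fun q => by positivity
  have hr₀ : 0 ≤ r := zero_le_one.trans hr
  have hηint : Integrable (fun p : X × X => dist p.1 p.2 ^ r) ((η k).map Prod.swap) :=
    integrable_dist_rpow_of_integrable_fst_snd hr₀ x₀
      (by rwa [Measure.fst_map_swap, Measure.snd, hη2 k])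
      (by rw [Measure.snd_map_swap, Measure.fst, hη1 k]; exact hmomμk k)
  have hτint : Integrable (fun p : Y × Y => dist p.1 p.2 ^ r) (τ k) :=
    integrable_dist_rpow_of_integrable_fst_snd hr₀ y₀
      (by rwa [Measure.fst, hτ1 k]) (by rw [Measure.snd, hτ2 k]; exact hmomνk k)
  rw [integral_dist_rpow_add_dist_rpow (hρX ▸ hηint) (hρY ▸ hτint), hρX, hρY,
    integral_dist_rpow_map_swap, hηopt, hτopt, WrRpow_comm]

/-- Stability of couplings: the couplings `π^k` obtained by gluing `W_r`-optimal
couplings `η^k ∈ Π(μ^k, μ)` and `τ^k ∈ Π(ν, ν^k)` with `π ∈ Π(μ, ν)` are couplings of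
`μ^k` and `ν^k` satisfying `W_r^r(π, π^k) ≤ W_r^r(μ, μ^k) + W_r^r(ν, ν^k)` for the
product metric `(d_X^r + d_Y^r)^{1/r}` on `X × Y`. -/
theorem stmt15 {X Y : Type*}
    [MetricSpace X] [CompleteSpace X] [SecondCountableTopology X]
    [MeasurableSpace X] [BorelSpace X]
    [MetricSpace Y] [CompleteSpace Y] [SecondCountableTopology Y]
    [MeasurableSpace Y] [BorelSpace Y] [Nonempty Y]
    (r : ℝ) (hr : 1 ≤ r) (x₀ : X) (y₀ : Y)
    (μ : Measure X) (ν : Measure Y) (μk : ℕ → Measure X) (νk : ℕ → Measure Y)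
    [IsProbabilityMeasure μ] [IsProbabilityMeasure ν]
    [∀ k, IsProbabilityMeasure (μk k)] [∀ k, IsProbabilityMeasure (νk k)]
    (hmomμ : Integrable (fun x => dist x x₀ ^ r) μ)
    (hmomν : Integrable (fun y => dist y y₀ ^ r) ν)
    (hmomμk : ∀ k, Integrable (fun x => dist x x₀ ^ r) (μk k))
    (hmomνk : ∀ k, Integrable (fun y => dist y y₀ ^ r) (νk k))
    (hWμ : Filter.Tendsto (fun k => WrRpow r (μk k) μ) Filter.atTop (nhds 0))
    (hWν : Filter.Tendsto (fun k => WrRpow r (νk k) ν) Filter.atTop (nhds 0))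
    (π : Measure (X × Y)) [IsProbabilityMeasure π]
    (hπ1 : π.map Prod.fst = μ) (hπ2 : π.map Prod.snd = ν)
    (η : ℕ → Measure (X × X)) [∀ k, IsFiniteMeasure (η k)]
    (hη1 : ∀ k, (η k).map Prod.fst = μk k) (hη2 : ∀ k, (η k).map Prod.snd = μ)
    (hηopt : ∀ k, ∫ p, dist p.1 p.2 ^ r ∂(η k) = WrRpow r (μk k) μ)
    (τ : ℕ → Measure (Y × Y)) [∀ k, IsFiniteMeasure (τ k)]
    (hτ1 : ∀ k, (τ k).map Prod.fst = ν) (hτ2 : ∀ k, (τ k).map Prod.snd = νk k)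
    (hτopt : ∀ k, ∫ p, dist p.1 p.2 ^ r ∂(τ k) = WrRpow r ν (νk k)) :
    ∀ k, letI πk : Measure (X × Y) :=
        (η k).bind (fun q : X × X =>
          (π.condKernel q.2).bind (fun y : Y =>
            ((τ k).condKernel y).map (fun yk : Y => (q.1, yk))))
      (πk.map Prod.fst = μk k ∧ πk.map Prod.snd = νk k) ∧
        sInf {c : ℝ | ∃ ρ : Measure ((X × Y) × (X × Y)),
            ρ.map Prod.fst = π ∧ ρ.map Prod.snd = πk ∧
            c = ∫ q, (dist q.1.1 q.2.1 ^ r + dist q.1.2 q.2.2 ^ r) ∂ρ}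
          ≤ WrRpow r μ (μk k) + WrRpow r ν (νk k) :=
  stmt15_general r hr x₀ y₀ μ ν μk νk hmomμ hmomν hmomμk hmomνk π hπ1 hπ2 η hη1 hη2 hηopt τ hτ1 hτ2
    hτopt
end
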